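/- arXiv:1406.0594 — 3 statements merged into one kernel-verified Lean document; each statement's English description precedes it below -/
import Mathlib

section
/- (Whittaker–Kotel'nikov–Shannon) If f(t) = (1/√(2π)) ∫_{-σ}^{σ} e^{ixt} g(x) dx with g ∈ L²(-σ,σ), then for every t ∈ ℝ, f(t) = Σ_{k∈ℤ} f(kπ/σ) · sinc(σt - kπ), where sinc(u) = sin(u)/u for u ≠ 0 and sinc(0) = 1, and the series converges absolutely. -/
/-!
For fixed `t`, the samples `f (-nπ/σ)` are `2σ / √(2π)` times the Fourier coefficients of `g` on
`(-σ, σ]`, the values `sinc (σt + nπ)` are the Fourier coefficients of `x ↦ e^{-ixt}`, and `f t` is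
`2σ / √(2π)` times the normalised `L²` inner product of `x ↦ e^{-ixt}` with `g`. Parseval's identity
for inner products is therefore the sampling formula, and it converges absolutely because both
coefficient sequences are square summable.
-/

open MeasureTheory Complex Real

noncomputable def sinc (u : ℝ) : ℝ := if u = 0 then 1 else Real.sin u / u

open ComplexConjugate Set AddCircle

theorem hasSum_prod_fourierCoeff {T : ℝ} [hT : Fact (0 < T)]
    (f g : Lp ℂ 2 (@haarAddCircle T hT)) :
    HasSum (fun i ↦ conj (fourierCoeff f i) * fourierCoeff g i)
      (∫ z : AddCircle T, conj (f z) * g z ∂haarAddCircle) := by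
  simp_rw [mul_comm (conj _)]
  refine HasSum.congr_fun (fourierBasis.hasSum_inner_mul_inner f g) (fun n ↦ ?_)
  simp only [← fourierBasis_repr, HilbertBasis.repr_apply_apply, inner_conj_symm,
    mul_comm (inner ℂ f _)]

theorem hasSum_prod_fourierCoeffOn {a b : ℝ} {f g : ℝ → ℂ} (hab : a < b)
    (hf : MemLp f 2 (volume.restrict (Ioc a b))) (hg : MemLp g 2 (volume.restrict (Ioc a b))) :
    HasSum (fun i ↦ conj (fourierCoeffOn hab f i) * fourierCoeffOn hab g i)
      ((b - a)⁻¹ • ∫ x in a..b, conj (f x) * g x) := by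
  have := Fact.mk (by linarith : 0 < b - a)
  rw [← add_sub_cancel a b] at hf hg
  have hf' := hf.memLp_liftIoc.haarAddCircle
  have hg' := hg.memLp_liftIoc.haarAddCircle
  convert hasSum_prod_fourierCoeff hf'.toLp hg'.toLp using 1
  · ext i
    simp only [fourierCoeff_congr_ae hf'.coeFn_toLp, fourierCoeff_congr_ae hg'.coeFn_toLp,
      fourierCoeff_liftIoc_eq, add_sub_cancel]
  · nth_rw 2 [← add_sub_cancel a b]
    rw [← AddCircle.integral_liftIoc_eq_intervalIntegral, ← integral_haarAddCircle]
    apply integral_congr_ae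
    filter_upwards [hf'.coeFn_toLp, hg'.coeFn_toLp] with x hfx hgx
    rw [hfx, hgx]
    rfl

theorem summable_norm_prod_fourierCoeffOn {a b : ℝ} {f g : ℝ → ℂ} (hab : a < b)
    (hf : MemLp f 2 (volume.restrict (Ioc a b))) (hg : MemLp g 2 (volume.restrict (Ioc a b))) :
    Summable fun i ↦ ‖conj (fourierCoeffOn hab f i) * fourierCoeffOn hab g i‖ := by
  refine .of_nonneg_of_le (fun _ ↦ norm_nonneg _) (fun i ↦ ?_)
    ((hasSum_sq_fourierCoeffOn hab hf).summable.add (hasSum_sq_fourierCoeffOn hab hg).summable)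
  rw [norm_mul, RCLike.norm_conj]
  nlinarith [two_mul_le_add_sq ‖fourierCoeffOn hab f i‖ ‖fourierCoeffOn hab g i‖,
    mul_nonneg (norm_nonneg (fourierCoeffOn hab f i)) (norm_nonneg (fourierCoeffOn hab g i))]

theorem integral_exp_mul_mul_I_eq_sinc (ω r : ℝ) :
    ∫ x in -r..r, exp (ω * x * I) = 2 * r * Real.sinc (ω * r) := by
  rcases eq_or_ne ω 0 with rfl | hω
  · simp [two_mul]
  have := intervalIntegral.integral_comp_mul_left (fun u : ℝ ↦ exp (u * I)) hω (a := -r) (b := r)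
  simp only [ofReal_mul] at this
  rw [this, mul_neg, integral_exp_mul_I_eq_sinc, real_smul]
  push_cast
  field_simp [ofReal_ne_zero.mpr hω]

theorem fourierCoeffOn_neg_self_eq_integral {σ : ℝ} (hσ : -σ < σ) (φ : ℝ → ℂ) (n : ℤ) :
    fourierCoeffOn hσ φ n = (2 * σ : ℂ)⁻¹ * ∫ x in -σ..σ, exp (I * x * ↑(-(n * π / σ))) * φ x := by
  have hσ0 : (σ : ℂ) ≠ 0 := ofReal_ne_zero.mpr (by linarith)
  rw [fourierCoeffOn_eq_integral, real_smul]
  congr 1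
  · push_cast; ring
  · refine intervalIntegral.integral_congr fun x _ ↦ ?_
    rw [fourier_coe_apply, smul_eq_mul]
    congr 2
    push_cast
    field_simp
    ring

theorem fourierCoeffOn_exp_neg_mul_I {σ : ℝ} (hσ : -σ < σ) (t : ℝ) (n : ℤ) :
    fourierCoeffOn hσ (fun x : ℝ ↦ exp (-(I * x * t))) n = Real.sinc (σ * t + n * π) := by
  have hσ0 : σ ≠ 0 := by linarith
  have hexp (x : ℝ) :
      exp (I * x * ↑(-(n * π / σ))) * exp (-(I * x * t)) = exp (↑(-(n * π / σ) - t) * x * I) := by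
    rw [← Complex.exp_add]
    push_cast
    ring_nf
  simp_rw [fourierCoeffOn_neg_self_eq_integral, hexp, integral_exp_mul_mul_I_eq_sinc]
  rw [show (-(n * π / σ) - t) * σ = -(σ * t + n * π) by field_simp; ring, Real.sinc_neg]
  field_simp [ofReal_ne_zero.mpr hσ0]

/-- **Whittaker–Kotel'nikov–Shannon sampling theorem** for Paley–Wiener
functions `f(t) = (1/√(2π)) ∫_{-σ}^{σ} e^{ixt} g(x) dx`. -/
theorem wks_sampling
    (σ : ℝ) (hσ : 0 < σ) (g : ℝ → ℂ)
    (hg : MemLp g 2 (volume.restrict (Set.Ioc (-σ) σ)))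
    (f : ℝ → ℂ)
    (hf : ∀ t : ℝ, f t =
      (1 / Real.sqrt (2 * Real.pi)) *
        ∫ x in (-σ)..σ, Complex.exp (Complex.I * x * t) * g x) :
    ∀ t : ℝ,
      Summable (fun k : ℤ => ‖f (k * Real.pi / σ) * (_root_.sinc (σ * t - k * Real.pi) : ℂ)‖) ∧
      HasSum (fun k : ℤ => f (k * Real.pi / σ) * (_root_.sinc (σ * t - k * Real.pi) : ℂ)) (f t) := by
  intro t
  have hab : -σ < σ := by linarith
  have hσ0 : (σ : ℂ) ≠ 0 := ofReal_ne_zero.mpr hσ.ne'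
  set e : ℝ → ℂ := fun x ↦ exp (-(I * x * t))
  -- normalised so that its Fourier coefficients are exactly the samples `f (-nπ/σ)`
  set G : ℝ → ℂ := fun x ↦ (2 * σ / √(2 * π) : ℝ) * g x
  have he : MemLp e 2 (volume.restrict (Ioc (-σ) σ)) :=
    .of_bound (by fun_prop : Continuous e).aestronglyMeasurable 1
      (ae_of_all _ fun x ↦ by simp [e, norm_exp])
  have hG : MemLp G 2 (volume.restrict (Ioc (-σ) σ)) := hg.const_mul _
  have hsample (s : ℝ) : (2 * σ : ℂ)⁻¹ * ∫ x in -σ..σ, exp (I * x * s) * G x = f s := by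
    have hsqrt : (√(2 * π) : ℂ) ≠ 0 := ofReal_ne_zero.mpr (by positivity)
    simp only [G, mul_left_comm _ ((2 * σ / √(2 * π) : ℝ) : ℂ)]
    rw [intervalIntegral.integral_const_mul, hf s, ← mul_assoc]
    congr 1
    push_cast
    field_simp
  have hcoeff_G (n : ℤ) : fourierCoeffOn hab G n = f (-(n * π / σ)) := by
    rw [fourierCoeffOn_neg_self_eq_integral, hsample]
  have hinner : (σ - -σ)⁻¹ • ∫ x in -σ..σ, conj (e x) * G x = f t := by
    have hconj (x : ℝ) : conj (e x) = exp (I * x * t) := by simp [e, ← exp_conj]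
    simp_rw [hconj]
    rw [← hsample t, real_smul]
    push_cast
    ring
  have hterm (k : ℤ) : f (k * π / σ) * (_root_.sinc (σ * t - k * π) : ℂ) =
      conj (fourierCoeffOn hab e (-k)) * fourierCoeffOn hab G (-k) := by
    rw [fourierCoeffOn_exp_neg_mul_I, hcoeff_G, conj_ofReal, mul_comm, Int.cast_neg]
    congr 3 <;> ring
  simp_rw [hterm]
  refine ⟨?_, ?_⟩
  · exact (summable_norm_prod_fourierCoeffOn hab he hG).comp_injective neg_injective
  · rw [← hinner]
    exact (Equiv.neg ℤ).hasSum_iff.mpr (hasSum_prod_fourierCoeffOn hab he hG)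
end

section
/- (Kramer's sampling theorem) Let I be a finite closed interval, K(x,t) a kernel with K(·,t) ∈ L²(I) for all t, and {t_k}_{k∈ℤ} real numbers such that {K(·,t_k)} is a complete orthogonal set in L²(I). If f(t) = ∫_I K(x,t) g(x) dx with g ∈ L²(I), then f(t) = Σ_k f(t_k) · (∫_I K(x,t) conj(K(x,t_k)) dx) / ‖K(·,t_k)‖²_{L²(I)} for all t, with the series converging in the sense of matching all partial sums from the orthogonal expansion of g. -/
/-! The functions `K(·, t_k) / ‖K(·, t_k)‖` form a Hilbert basis of `L²(I)`, so Parseval's identity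
`⟪u, w⟫ = ∑ ⟪u, e_k⟫ ⟪e_k, w⟫` holds for them. Applied to `u = conj g` and `w = K(·, t)`, the left
side is `f t` and the `k`-th term is `f(t_k) ⟪K(·, t_k), K(·, t)⟫ / ‖K(·, t_k)‖²`. -/

open MeasureTheory
open scoped InnerProductSpace ComplexConjugate

section OrthogonalExpansion

variable {𝕜 E ι : Type*} [RCLike 𝕜] [NormedAddCommGroup E] [InnerProductSpace 𝕜 E]
  {v : ι → E}

theorem orthonormal_inv_norm_smul (hv : ∀ k, v k ≠ 0)
    (horth : Pairwise fun i j => ⟪v i, v j⟫_𝕜 = 0) :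
    Orthonormal 𝕜 fun k => (‖v k‖⁻¹ : 𝕜) • v k :=
  ⟨fun k => norm_smul_inv_norm (hv k), fun i j hij => by
    simp only [inner_smul_left, inner_smul_right, horth hij, mul_zero]⟩

theorem hasSum_inner_mul_inner_div_norm_sq [CompleteSpace E] (hv : ∀ k, v k ≠ 0)
    (horth : Pairwise fun i j => ⟪v i, v j⟫_𝕜 = 0)
    (hsp : (Submodule.span 𝕜 (Set.range v))ᗮ = ⊥) (x y : E) :
    HasSum (fun k => ⟪x, v k⟫_𝕜 * ⟪v k, y⟫_𝕜 / (‖v k‖ : 𝕜) ^ 2) ⟪x, y⟫_𝕜 := by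
  set w := fun k => (‖v k‖⁻¹ : 𝕜) • v k
  have hspan : Submodule.span 𝕜 (Set.range v) ≤ Submodule.span 𝕜 (Set.range w) := by
    refine Submodule.span_le.mpr (Set.range_subset_iff.mpr fun k => ?_)
    have hvk : v k = (‖v k‖ : 𝕜) • w k := by
      simp [w, smul_smul, norm_ne_zero_iff.mpr (hv k)]
    exact hvk ▸ Submodule.smul_mem _ _ (Submodule.subset_span ⟨k, rfl⟩)
  have hsp' : (Submodule.span 𝕜 (Set.range w))ᗮ = ⊥ :=
    eq_bot_iff.mpr (hsp ▸ Submodule.orthogonal_le hspan)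
  refine ((HilbertBasis.mkOfOrthogonalEqBot (orthonormal_inv_norm_smul hv horth)
    hsp').hasSum_inner_mul_inner x y).congr_fun fun k => ?_
  simp only [HilbertBasis.coe_mkOfOrthogonalEqBot, inner_smul_left, inner_smul_right, map_inv₀,
    RCLike.conj_ofReal]
  ring

end OrthogonalExpansion

namespace MeasureTheory

variable {α 𝕜 : Type*} [RCLike 𝕜] [MeasurableSpace α] {μ : Measure α}

theorem MemLp.inner_toLp {f g : α → 𝕜} (hf : MemLp f 2 μ) (hg : MemLp g 2 μ) :
    ⟪hf.toLp f, hg.toLp g⟫_𝕜 = ∫ x, conj (f x) * g x ∂μ := by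
  rw [L2.inner_def]
  refine integral_congr_ae ?_
  filter_upwards [hf.coeFn_toLp, hg.coeFn_toLp] with x hfx hgx
  rw [hfx, hgx, RCLike.inner_apply, mul_comm]

theorem MemLp.norm_toLp_sq {f : α → 𝕜} (hf : MemLp f 2 μ) :
    ‖hf.toLp f‖ ^ 2 = ∫ x, ‖f x‖ ^ 2 ∂μ := by
  have h := inner_self_eq_norm_sq_to_K (𝕜 := 𝕜) (hf.toLp f)
  simp only [hf.inner_toLp, RCLike.conj_mul, ← RCLike.ofReal_pow, integral_ofReal,
    RCLike.ofReal_inj] at h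
  exact h.symm

theorem orthogonal_span_range_toLp_eq_bot {ι : Type*} {v : ι → α → 𝕜}
    (hv : ∀ k, MemLp (v k) 2 μ)
    (hcomp : ∀ h : α → 𝕜, MemLp h 2 μ → (∀ k, ∫ x, h x * conj (v k x) ∂μ = 0) → h =ᵐ[μ] 0) :
    (Submodule.span 𝕜 (Set.range fun k => (hv k).toLp (v k)))ᗮ = ⊥ := by
  refine (Submodule.eq_bot_iff _).mpr fun u hu => ?_
  have hu_orth : ∀ k, ∫ x, u x * conj (v k x) ∂μ = 0 := fun k => by
    have h := (Submodule.mem_orthogonal' _ u).mp hu _ (Submodule.subset_span ⟨k, rfl⟩)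
    rw [← Lp.toLp_coeFn u (Lp.memLp u), MemLp.inner_toLp] at h
    simpa [← integral_conj, mul_comm] using congrArg conj h
  exact Lp.eq_zero_iff_ae_eq_zero.mpr (hcomp u (Lp.memLp u) hu_orth)

end MeasureTheory

/-- **Kramer's sampling theorem.** -/
theorem kramer_sampling
    (a b : ℝ) (hab : a < b)
    (K : ℝ → ℂ → ℂ)
    (hK : ∀ t : ℂ, MemLp (fun x => K x t) 2 (volume.restrict (Set.Ioc a b)))
    (tk : ℤ → ℝ)
    -- orthogonality of the family {K(·, t_k)}
    (horth : ∀ j k : ℤ, j ≠ k →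
      ∫ x in a..b, K x (tk j) * (starRingEnd ℂ) (K x (tk k)) = 0)
    -- each member is nonzero
    (hnz : ∀ k : ℤ, 0 < ∫ x in a..b, ‖K x (tk k)‖ ^ 2)
    -- completeness of the family in L²(I)
    (hcomp : ∀ h : ℝ → ℂ, MemLp h 2 (volume.restrict (Set.Ioc a b)) →
      (∀ k : ℤ, ∫ x in a..b, h x * (starRingEnd ℂ) (K x (tk k)) = 0) →
      h =ᵐ[volume.restrict (Set.Ioc a b)] 0)
    (g : ℝ → ℂ) (hg : MemLp g 2 (volume.restrict (Set.Ioc a b)))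
    (f : ℂ → ℂ)
    (hf : ∀ t : ℂ, f t = ∫ x in a..b, K x t * g x) :
    ∀ t : ℂ,
      HasSum (fun k : ℤ =>
        f (tk k) * (∫ x in a..b, K x t * (starRingEnd ℂ) (K x (tk k))) /
          ((∫ x in a..b, ‖K x (tk k)‖ ^ 2 : ℝ) : ℂ)) (f t) := by
  intro t
  simp only [intervalIntegral.integral_of_le hab.le] at horth hnz hcomp hf ⊢
  let V : ℤ → Lp ℂ 2 (volume.restrict (Set.Ioc a b)) := fun k => (hK (tk k)).toLp _
  have hnorm : ∀ k, ‖V k‖ ^ 2 = ∫ x in Set.Ioc a b, ‖K x (tk k)‖ ^ 2 :=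
    fun k => (hK (tk k)).norm_toLp_sq
  have hV : ∀ k, V k ≠ 0 := fun k hk => by
    have := hnorm k ▸ hnz k
    simp [hk] at this
  have horthV : Pairwise fun j k => ⟪V j, V k⟫_ℂ = 0 := fun j k hjk => by
    simpa [V, MemLp.inner_toLp, mul_comm] using horth k j hjk.symm
  have hparseval := hasSum_inner_mul_inner_div_norm_sq hV horthV
    (orthogonal_span_range_toLp_eq_bot (fun k => hK (tk k)) hcomp) (hg.star.toLp _) ((hK t).toLp _)
  rw [show f t = ⟪hg.star.toLp _, (hK t).toLp _⟫_ℂ by simp [hf, MemLp.inner_toLp, mul_comm]]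
  refine hparseval.congr_fun fun k => ?_
  rw [← hnorm]
  simp [V, hf, MemLp.inner_toLp, mul_comm]
end

section
/- Under the perturbation condition D := sup_{k∈ℤ} |t_k - kπ/σ| < π/(4σ) on a sequence of real sampling points, the product G(t) = (t - t₀) ∏_{k=1}^{∞} (1 - t/t_k)(1 - t/t_{-k}) converges locally uniformly on ℂ and defines an entire function whose zero set is exactly {t_k : k ∈ ℤ}. -/
/-!
Pairing `t_k` with `t_{-k}` is what makes the product converge:
`(1 - z/a)(1 - z/b) - 1 = (z² - z(a + b)) / (ab)`, and the perturbation condition gives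
`|t_k| ≥ (π/σ - D)|k|` and `|t_k + t_{-k}| ≤ 2D`, so for `‖z‖ ≤ R` the `k`-th paired factor is
`1 + O(R² / k²)`. A product `∏ (1 + f_k)` with `∑_k sup_K ‖f_k‖ < ∞` converges uniformly on the
compact set `K` and vanishes only where a factor does; a locally uniform limit of entire
functions is entire.
-/

open Filter Topology

lemma one_sub_div_mul_one_sub_div_sub_one {𝕜 : Type*} [Field 𝕜] {a b : 𝕜} (ha : a ≠ 0)
    (hb : b ≠ 0) (z : 𝕜) :
    (1 - z / a) * (1 - z / b) - 1 = (z ^ 2 - z * (a + b)) / (a * b) := by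
  field_simp
  ring

lemma norm_one_sub_div_mul_one_sub_div_sub_one_le {𝕜 : Type*} [NormedField 𝕜] {a b : 𝕜}
    (ha : a ≠ 0) (hb : b ≠ 0) (z : 𝕜) :
    ‖(1 - z / a) * (1 - z / b) - 1‖ ≤ (‖z‖ ^ 2 + ‖z‖ * ‖a + b‖) / (‖a‖ * ‖b‖) := by
  rw [one_sub_div_mul_one_sub_div_sub_one ha hb, norm_div, norm_mul]
  gcongr
  calc _ ≤ ‖z ^ 2‖ + ‖z * (a + b)‖ := norm_sub_le _ _
    _ = _ := by rw [norm_pow, norm_mul]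

lemma sub_mul_abs_le_abs_of_abs_sub_intCast_mul_le {x d D : ℝ} {k : ℤ}
    (h : |x - k * d| ≤ D) : (d - D) * |(k : ℝ)| ≤ |x| := by
  have hD : 0 ≤ D := (abs_nonneg _).trans h
  rcases eq_or_ne k 0 with rfl | hk
  · simp
  have hk1 : (1 : ℝ) ≤ |(k : ℝ)| := by exact_mod_cast Int.one_le_abs hk
  have hx : |(k : ℝ)| * |d| - D ≤ |x| := by
    have := abs_sub_abs_le_abs_sub (k * d) x
    rw [abs_sub_comm, abs_mul] at this
    linarith
  nlinarith [le_abs_self d]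

lemma Finset.prod_Icc_one_eq_prod_range {M : Type*} [CommMonoid M] (g : ℕ → M) (N : ℕ) :
    ∏ k ∈ Finset.Icc 1 N, g k = ∏ n ∈ Finset.range N, g (n + 1) := by
  rw [Finset.range_eq_Ico, Finset.prod_Ico_add' g 0 N 1]
  rfl

lemma summable_div_succ_sq (C : ℝ) : Summable fun n : ℕ => C / ((n + 1 : ℕ) : ℝ) ^ 2 := by
  have := (summable_nat_add_iff 1).mpr (Real.summable_one_div_nat_pow.mpr one_lt_two)
  simpa [div_eq_mul_one_div C] using this.mul_left C

noncomputable def pairedFactor (s : ℤ → ℂ) (k : ℕ) (z : ℂ) : ℂ :=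
  (1 - z / s k) * (1 - z / s (-k))

noncomputable def pairedProduct (s : ℤ → ℂ) (z : ℂ) : ℂ :=
  (z - s 0) * ∏' n : ℕ, pairedFactor s (n + 1) z

@[fun_prop]
lemma continuous_pairedFactor (s : ℤ → ℂ) (k : ℕ) : Continuous (pairedFactor s k) := by
  unfold pairedFactor
  fun_prop

@[fun_prop]
lemma differentiable_pairedFactor (s : ℤ → ℂ) (k : ℕ) :
    Differentiable ℂ (pairedFactor s k) := by
  unfold pairedFactor
  fun_prop

lemma pairedFactor_eq_zero_iff {s : ℤ → ℂ} {k : ℕ} (hk : s k ≠ 0) (hk' : s (-k) ≠ 0)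
    {z : ℂ} : pairedFactor s k z = 0 ↔ s k = z ∨ s (-k) = z := by
  simp only [pairedFactor, mul_eq_zero, sub_eq_zero, eq_comm (a := (1 : ℂ)),
    div_eq_one_iff_eq hk, div_eq_one_iff_eq hk']
  tauto

structure LinearlyGrowingNearlyOdd (s : ℤ → ℂ) (c B : ℝ) : Prop where
  pos : 0 < c
  mul_abs_le_norm : ∀ k : ℤ, c * |(k : ℝ)| ≤ ‖s k‖
  norm_add_neg_le : ∀ k : ℤ, ‖s k + s (-k)‖ ≤ B

lemma linearlyGrowingNearlyOdd_of_abs_sub_le {t : ℤ → ℝ} {d D : ℝ} (hDd : D < d)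
    (hdev : ∀ k : ℤ, |t k - k * d| ≤ D) :
    LinearlyGrowingNearlyOdd (fun k => (t k : ℂ)) (d - D) (2 * D) where
  pos := sub_pos.mpr hDd
  mul_abs_le_norm k := by
    simpa only [Complex.norm_real, Real.norm_eq_abs] using
      sub_mul_abs_le_abs_of_abs_sub_intCast_mul_le (hdev k)
  norm_add_neg_le k := by
    rw [← Complex.ofReal_add, Complex.norm_real, Real.norm_eq_abs]
    have hpos := abs_le.mp (hdev k)
    have hneg := abs_le.mp (hdev (-k))
    rw [Int.cast_neg] at hneg
    exact abs_le.mpr ⟨by linarith, by linarith⟩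

namespace LinearlyGrowingNearlyOdd

variable {s : ℤ → ℂ} {c B : ℝ}

lemma ne_zero (hs : LinearlyGrowingNearlyOdd s c B) {k : ℤ} (hk : k ≠ 0) : s k ≠ 0 := by
  have : 0 < c * |(k : ℝ)| := mul_pos hs.pos (by positivity)
  exact norm_pos_iff.mp (this.trans_le (hs.mul_abs_le_norm k))

lemma norm_pairedFactor_sub_one_le (hs : LinearlyGrowingNearlyOdd s c B) {k : ℕ} (hk : k ≠ 0)
    {R : ℝ} {z : ℂ} (hz : ‖z‖ ≤ R) :
    ‖pairedFactor s k z - 1‖ ≤ (R ^ 2 + R * B) / c ^ 2 / (k : ℝ) ^ 2 := by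
  have hkZ : (k : ℤ) ≠ 0 := by exact_mod_cast hk
  have hpos : c * k ≤ ‖s k‖ := by simpa using hs.mul_abs_le_norm k
  have hneg : c * k ≤ ‖s (-k)‖ := by simpa using hs.mul_abs_le_norm (-k)
  refine (norm_one_sub_div_mul_one_sub_div_sub_one_le (hs.ne_zero hkZ)
    (hs.ne_zero (neg_ne_zero.mpr hkZ)) z).trans ?_
  rw [div_div, ← mul_pow]
  have hR : 0 ≤ R := (norm_nonneg z).trans hz
  have hB : 0 ≤ B := (norm_nonneg _).trans (hs.norm_add_neg_le 0)
  have hc : 0 < c := hs.pos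
  gcongr
  · exact hs.norm_add_neg_le k
  · rw [sq]
    exact mul_le_mul hpos hneg (by positivity) (norm_nonneg _)

lemma hasProdUniformlyOn_pairedFactor (hs : LinearlyGrowingNearlyOdd s c B) {K : Set ℂ}
    (hK : IsCompact K) :
    HasProdUniformlyOn (fun n : ℕ => pairedFactor s (n + 1))
      (fun z => ∏' n : ℕ, pairedFactor s (n + 1) z) K := by
  obtain ⟨R, hR⟩ := hK.isBounded.exists_norm_le
  have := Summable.hasProdUniformlyOn_nat_one_add
    (f := fun n z => pairedFactor s (n + 1) z - 1) hK
    (summable_div_succ_sq ((R ^ 2 + R * B) / c ^ 2))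
    (Eventually.of_forall fun n z hz =>
      hs.norm_pairedFactor_sub_one_le n.succ_ne_zero (hR z hz))
    (fun n => ((continuous_pairedFactor s _).sub continuous_const).continuousOn)
  simpa using this

lemma tendstoLocallyUniformly_pairedProduct (hs : LinearlyGrowingNearlyOdd s c B) :
    TendstoLocallyUniformly
      (fun (N : ℕ) (z : ℂ) => (z - s 0) * ∏ n ∈ Finset.range N, pairedFactor s (n + 1) z)
      (pairedProduct s) atTop := by
  have hlin : TendstoLocallyUniformly (fun (_ : ℕ) (z : ℂ) => z - s 0) (· - s 0) atTop :=
    TendstoUniformly.tendstoLocallyUniformly fun _ hu =>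
      Eventually.of_forall fun _ _ => refl_mem_uniformity hu
  have hprod : TendstoLocallyUniformly
      (fun (N : ℕ) (z : ℂ) => ∏ n ∈ Finset.range N, pairedFactor s (n + 1) z)
      (fun z => ∏' n : ℕ, pairedFactor s (n + 1) z) atTop :=
    tendstoLocallyUniformly_iff_forall_isCompact.mpr fun K hK =>
      (hs.hasProdUniformlyOn_pairedFactor hK).tendstoUniformlyOn_finsetRange
  exact hlin.mul₀ hprod (by fun_prop)
    (hprod.continuous (Frequently.of_forall fun N => by fun_prop))

lemma differentiable_pairedProduct (hs : LinearlyGrowingNearlyOdd s c B) :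
    Differentiable ℂ (pairedProduct s) := by
  rw [← differentiableOn_univ]
  have hconv := tendstoLocallyUniformlyOn_univ.mpr hs.tendstoLocallyUniformly_pairedProduct
  exact hconv.differentiableOn
    (Eventually.of_forall fun N => Differentiable.differentiableOn (by fun_prop)) isOpen_univ

lemma tprod_pairedFactor_eq_zero_iff (hs : LinearlyGrowingNearlyOdd s c B) {z : ℂ} :
    ∏' n : ℕ, pairedFactor s (n + 1) z = 0 ↔ ∃ n : ℕ, pairedFactor s (n + 1) z = 0 := by
  refine ⟨fun h => ?_, tprod_of_exists_eq_zero⟩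
  by_contra! hne
  refine tprod_one_add_ne_zero_of_summable (f := fun n => pairedFactor s (n + 1) z - 1)
    (by simpa using hne) ?_ (by simpa using h)
  exact (summable_div_succ_sq _).of_nonneg_of_le (fun _ => norm_nonneg _) fun n =>
    hs.norm_pairedFactor_sub_one_le n.succ_ne_zero le_rfl

lemma pairedProduct_eq_zero_iff (hs : LinearlyGrowingNearlyOdd s c B) {z : ℂ} :
    pairedProduct s z = 0 ↔ ∃ k : ℤ, s k = z := by
  have hfactor (n : ℕ) :
      pairedFactor s (n + 1) z = 0 ↔ s (n + 1 : ℕ) = z ∨ s (-(n + 1 : ℕ) : ℤ) = z :=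
    pairedFactor_eq_zero_iff (hs.ne_zero (by omega)) (hs.ne_zero (by omega))
  simp only [pairedProduct, mul_eq_zero, sub_eq_zero, hs.tprod_pairedFactor_eq_zero_iff,
    hfactor]
  constructor
  · rintro (h | ⟨n, h | h⟩)
    exacts [⟨0, h.symm⟩, ⟨_, h⟩, ⟨_, h⟩]
  · rintro ⟨k, rfl⟩
    obtain ⟨_ | n, rfl | rfl⟩ := k.eq_nat_or_neg
    · simp
    · simp
    · exact .inr ⟨n, .inl rfl⟩
    · exact .inr ⟨n, .inr rfl⟩

end LinearlyGrowingNearlyOdd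

theorem pwl_product_entire_general
    (σ : ℝ) (hσ : 0 < σ) (t : ℤ → ℝ)
    (hD : ∃ D : ℝ, D < Real.pi / (4 * σ) ∧
      ∀ k : ℤ, |t k - k * Real.pi / σ| ≤ D) :
    ∃ G : ℂ → ℂ,
      (∀ K : Set ℂ, IsCompact K →
        TendstoUniformlyOn
          (fun (N : ℕ) (z : ℂ) =>
            (z - (t 0 : ℂ)) * ∏ k ∈ Finset.Icc 1 N,
              ((1 - z / (t (k : ℤ) : ℂ)) * (1 - z / (t (-(k : ℤ)) : ℂ))))
          G atTop K) ∧
      Differentiable ℂ G ∧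
      (∀ z : ℂ, G z = 0 ↔ ∃ k : ℤ, (t k : ℂ) = z) := by
  obtain ⟨D, hDσ, hdev⟩ := hD
  have hDd : D < Real.pi / σ := hDσ.trans (by gcongr; linarith)
  have hs := linearlyGrowingNearlyOdd_of_abs_sub_le hDd fun k => by
    simpa only [mul_div_assoc] using hdev k
  refine ⟨pairedProduct (fun k => t k), fun K hK => ?_, hs.differentiable_pairedProduct,
    fun z => hs.pairedProduct_eq_zero_iff⟩
  simp only [Finset.prod_Icc_one_eq_prod_range]
  exact tendstoLocallyUniformly_iff_forall_isCompact.mp hs.tendstoLocallyUniformly_pairedProduct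
    K hK

/-- Under the Paley–Wiener–Levinson perturbation condition
`sup_k |t_k - kπ/σ| < π/(4σ)`, the product
`G(t) = (t - t₀) ∏_{k≥1} (1 - t/t_k)(1 - t/t_{-k})` converges locally
uniformly on `ℂ` to an entire function whose zero set is exactly `{t_k}`. -/
theorem pwl_product_entire
    (σ : ℝ) (hσ : 0 < σ) (t : ℤ → ℝ)
    (hinj : Function.Injective t)
    (hnz : ∀ k : ℤ, k ≠ 0 → t k ≠ 0)
    (hD : ∃ D : ℝ, D < Real.pi / (4 * σ) ∧
      ∀ k : ℤ, |t k - k * Real.pi / σ| ≤ D) :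
    ∃ G : ℂ → ℂ,
      (∀ K : Set ℂ, IsCompact K →
        TendstoUniformlyOn
          (fun (N : ℕ) (z : ℂ) =>
            (z - (t 0 : ℂ)) * ∏ k ∈ Finset.Icc 1 N,
              ((1 - z / (t (k : ℤ) : ℂ)) * (1 - z / (t (-(k : ℤ)) : ℂ))))
          G atTop K) ∧
      Differentiable ℂ G ∧
      (∀ z : ℂ, G z = 0 ↔ ∃ k : ℤ, (t k : ℂ) = z) :=
  pwl_product_entire_general σ hσ t hD
end
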